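/- arXiv:1806.09830 — 4 statements merged into one kernel-verified Lean document; each statement's English description precedes it below -/
import Mathlib

section
/- Let τ : ℝⁿ → ℝ be a smooth function all of whose third partial derivatives vanish identically (the flat case of the projective first BGG equation ∇_{(a}∇_b∇_{c)}τ + 4P_{(ab}∇_{c)}τ + 2τ∇_{(a}P_{bc)} = 0, with the flat connection having P = 0). Define the symmetric 2-tensor field k on ℝⁿ by k_{bc} := τ ∂_b∂_c τ − ½ (∂_b τ)(∂_c τ). Then (i) ∂_{(a}k_{bc)} = 0, i.e. k is a Killing tensor for the flat connection, and (ii) for every x₀, u ∈ ℝⁿ the function t ↦ τ(γ(t))·Hess τ(γ(t))(u,u) − ½ (⟨∇τ(γ(t)), u⟩)², where γ(t) = x₀ + t u, is constant on ℝ. -/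
/-- The partial derivative `∂_a f` of a function `f : ℝⁿ → ℝ` in the `a`-th coordinate
direction. -/
noncomputable def partialDeriv' (n : ℕ) (a : Fin n) (f : (Fin n → ℝ) → ℝ) :
    (Fin n → ℝ) → ℝ :=
  fun x => fderiv ℝ f x (Pi.single a 1)

lemma L1 (n : ℕ) (f : (Fin n → ℝ) → ℝ) (x u : Fin n → ℝ) :
    fderiv ℝ f x u = ∑ b, partialDeriv' n b f x * u b := by
  have hu : ∑ b, u b • (Pi.single b (1:ℝ) : Fin n → ℝ) = u := by
    simp_rw [← Pi.single_smul, smul_eq_mul, mul_one, Finset.univ_sum_single]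
  conv_lhs => rw [← hu]
  rw [map_sum]
  simp [partialDeriv', mul_comm]

lemma L2 (n : ℕ) (a : Fin n) (f : (Fin n → ℝ) → ℝ) (hf : ContDiff ℝ (⊤ : ℕ∞) f) :
    ContDiff ℝ (⊤ : ℕ∞) (partialDeriv' n a f) := by
  have h1 : ContDiff ℝ (⊤ : ℕ∞) (fderiv ℝ f) := hf.fderiv_right (by simp)
  exact h1.clm_apply contDiff_const

lemma L3 (n : ℕ) (g : (Fin n → ℝ) → ℝ) (hg : ContDiff ℝ (⊤ : ℕ∞) g)
    (h : ∀ (a : Fin n) (x : Fin n → ℝ), partialDeriv' n a g x = 0) (x y : Fin n → ℝ) :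
    g x = g y := by
  apply is_const_of_fderiv_eq_zero (hg.differentiable (by simp))
  intro z
  ext u
  rw [ContinuousLinearMap.zero_apply, L1]
  simp [h]

lemma Lmul (n : ℕ) (a : Fin n) (f g : (Fin n → ℝ) → ℝ) (x : Fin n → ℝ)
    (hf : DifferentiableAt ℝ f x) (hg : DifferentiableAt ℝ g x) :
    partialDeriv' n a (fun y => f y * g y) x
      = partialDeriv' n a f x * g x + f x * partialDeriv' n a g x := by
  unfold partialDeriv'
  rw [fderiv_fun_mul hf hg]
  simp
  ring

lemma Lsub (n : ℕ) (a : Fin n) (f g : (Fin n → ℝ) → ℝ) (x : Fin n → ℝ)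
    (hf : DifferentiableAt ℝ f x) (hg : DifferentiableAt ℝ g x) :
    partialDeriv' n a (fun y => f y - g y) x
      = partialDeriv' n a f x - partialDeriv' n a g x := by
  unfold partialDeriv'
  rw [fderiv_fun_sub hf hg]
  simp

lemma Lcmul (n : ℕ) (a : Fin n) (c : ℝ) (f : (Fin n → ℝ) → ℝ) (x : Fin n → ℝ)
    (hf : DifferentiableAt ℝ f x) :
    partialDeriv' n a (fun y => c * f y) x = c * partialDeriv' n a f x := by
  unfold partialDeriv'
  rw [fderiv_const_mul hf]
  simp

/-- Let `τ : ℝⁿ → ℝ` be a smooth function all of whose third partial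
derivatives vanish identically (the flat case of the projective first BGG equation).
Define `k_{bc} := τ ∂_b ∂_c τ − ½ (∂_b τ)(∂_c τ)`. Then (i) `∂_{(a} k_{bc)} = 0`, i.e. `k`
is a Killing tensor for the flat connection, and (ii) for every `x₀, u ∈ ℝⁿ` the function
`t ↦ τ(γ t) · Hess τ(γ t)(u,u) − ½ ⟨∇τ(γ t), u⟩²`, where `γ t = x₀ + t u`, is constant. -/
theorem bgg_density_solution_killing_and_first_integral_flat
    (n : ℕ) (τ : (Fin n → ℝ) → ℝ) (hτ : ContDiff ℝ (⊤ : ℕ∞) τ)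
    (h3 : ∀ (a b c : Fin n) (x : Fin n → ℝ),
      partialDeriv' n a (partialDeriv' n b (partialDeriv' n c τ)) x = 0)
    (k : (Fin n → ℝ) → Fin n → Fin n → ℝ)
    (hk : ∀ x b c,
      k x b c = τ x * partialDeriv' n b (partialDeriv' n c τ) x
        - (1 / 2) * partialDeriv' n b τ x * partialDeriv' n c τ x) :
    (∀ (x : Fin n → ℝ) (v : Fin 3 → Fin n),
      ∑ σ : Equiv.Perm (Fin 3),
        partialDeriv' n (v (σ 0)) (fun y => k y (v (σ 1)) (v (σ 2))) x = 0) ∧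
    (∀ x₀ u : Fin n → ℝ, ∃ C : ℝ, ∀ t : ℝ,
      τ (x₀ + t • u) *
          (∑ b, ∑ c, partialDeriv' n b (partialDeriv' n c τ) (x₀ + t • u) * u b * u c)
        - (1 / 2) * (∑ b, partialDeriv' n b τ (x₀ + t • u) * u b) ^ 2 = C) := by
  have hτd : Differentiable ℝ τ := hτ.differentiable (by simp)
  have hpd : ∀ b : Fin n, ContDiff ℝ (⊤ : ℕ∞) (partialDeriv' n b τ) := fun b => L2 n b τ hτ
  have hpdd : ∀ b : Fin n, Differentiable ℝ (partialDeriv' n b τ) :=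
    fun b => (hpd b).differentiable (by simp)
  have hpp : ∀ b c : Fin n, ContDiff ℝ (⊤ : ℕ∞) (partialDeriv' n b (partialDeriv' n c τ)) :=
    fun b c => L2 n b _ (hpd c)
  have hppd : ∀ b c : Fin n, Differentiable ℝ (partialDeriv' n b (partialDeriv' n c τ)) :=
    fun b c => (hpp b c).differentiable (by simp)
  constructor
  · -- part (i)
    intro x v
    set Dτ : Fin n → ℝ := fun i => partialDeriv' n i τ x with hDτ
    set H : Fin n → Fin n → ℝ := fun i j => partialDeriv' n i (partialDeriv' n j τ) x with hHdef
    have hkd : ∀ a b c : Fin n, partialDeriv' n a (fun y => k y b c) x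
        = Dτ a * H b c - (1/2) * (H a b * Dτ c + Dτ b * H a c) := by
      intro a b c
      have hfun : (fun y => k y b c)
          = fun y => (fun y => τ y * partialDeriv' n b (partialDeriv' n c τ) y) y
              - (fun y => (1/2) * (partialDeriv' n b τ y * partialDeriv' n c τ y)) y := by
        funext y; rw [hk]; ring
      rw [hfun, Lsub n a _ _ x ((hτd x).fun_mul ((hppd b c) x))
            ((((hpdd b) x).fun_mul ((hpdd c) x)).const_mul _),
          Lmul n a _ _ x (hτd x) ((hppd b c) x),
          Lcmul n a _ _ x (((hpdd b) x).fun_mul ((hpdd c) x)),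
          Lmul n a _ _ x ((hpdd b) x) ((hpdd c) x),
          h3 a b c x]
      ring
    have hsummand : ∀ σ : Equiv.Perm (Fin 3),
        partialDeriv' n (v (σ 0)) (fun y => k y (v (σ 1)) (v (σ 2))) x
          = Dτ (v (σ 0)) * H (v (σ 1)) (v (σ 2))
            - (1/2) * (Dτ (v (σ 2)) * H (v (σ 0)) (v (σ 1)))
            - (1/2) * (Dτ (v (σ 1)) * H (v (σ 0)) (v (σ 2))) := by
      intro σ; rw [hkd]; ring
    rw [Finset.sum_congr rfl (fun σ _ => hsummand σ)]
    have A : Fin 3 → Fin 3 → Fin 3 → ℝ := fun i j l => Dτ (v i) * H (v j) (v l)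
    have e1 : ∑ σ : Equiv.Perm (Fin 3), Dτ (v (σ 2)) * H (v (σ 0)) (v (σ 1))
        = ∑ σ : Equiv.Perm (Fin 3), Dτ (v (σ 0)) * H (v (σ 1)) (v (σ 2)) := by
      refine Fintype.sum_equiv (Equiv.mulRight ((finRotate 3)⁻¹ : Equiv.Perm (Fin 3))) _ _ ?_
      intro σ
      have h0 : ((finRotate 3)⁻¹ : Equiv.Perm (Fin 3)) 0 = 2 := by decide
      have h1 : ((finRotate 3)⁻¹ : Equiv.Perm (Fin 3)) 1 = 0 := by decide
      have h2 : ((finRotate 3)⁻¹ : Equiv.Perm (Fin 3)) 2 = 1 := by decide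
      simp [Equiv.Perm.mul_apply, h0, h1, h2]
    have e2 : ∑ σ : Equiv.Perm (Fin 3), Dτ (v (σ 1)) * H (v (σ 0)) (v (σ 2))
        = ∑ σ : Equiv.Perm (Fin 3), Dτ (v (σ 0)) * H (v (σ 1)) (v (σ 2)) := by
      refine Fintype.sum_equiv (Equiv.mulRight (Equiv.swap (0:Fin 3) 1)) _ _ ?_
      intro σ
      have h0 : (Equiv.swap (0:Fin 3) 1) 0 = 1 := by decide
      have h1 : (Equiv.swap (0:Fin 3) 1) 1 = 0 := by decide
      have h2 : (Equiv.swap (0:Fin 3) 1) 2 = 2 := by decide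
      simp [Equiv.Perm.mul_apply, h0, h1, h2]
    simp only [Finset.sum_sub_distrib, ← Finset.mul_sum]
    rw [e1, e2]
    ring
  · -- part (ii)
    intro x₀ u
    have hH : ∀ (b c : Fin n) (x : Fin n → ℝ),
        partialDeriv' n b (partialDeriv' n c τ) x
          = partialDeriv' n b (partialDeriv' n c τ) 0 :=
      fun b c x => L3 n _ (hpp b c) (fun a y => h3 a b c y) x 0
    set Hm : Fin n → Fin n → ℝ := fun b c => partialDeriv' n b (partialDeriv' n c τ) 0 with hHm
    set Q : ℝ := ∑ b, ∑ c, Hm b c * u b * u c with hQ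
    set γ : ℝ → (Fin n → ℝ) := fun t => x₀ + t • u with hγdef
    have hγ : ∀ t : ℝ, HasDerivAt γ u t := fun t => by
      simpa [hγdef] using ((hasDerivAt_id t).smul_const u).const_add x₀
    have hcomp : ∀ (f : (Fin n → ℝ) → ℝ), Differentiable ℝ f → ∀ t : ℝ,
        HasDerivAt (fun s => f (γ s)) (fderiv ℝ f (γ t) u) t := by
      intro f hf t
      exact (hf (γ t)).hasFDerivAt.comp_hasDerivAt t (hγ t)
    have hP : ∀ t : ℝ, HasDerivAt (fun s => fderiv ℝ τ (γ s) u) Q t := by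
      intro t
      have hb : ∀ b : Fin n, HasDerivAt (fun s => partialDeriv' n b τ (γ s) * u b)
          ((∑ c, Hm c b * u c) * u b) t := by
        intro b
        have hfd : fderiv ℝ (partialDeriv' n b τ) (γ t) u = ∑ c, Hm c b * u c := by
          rw [L1]
          exact Finset.sum_congr rfl (fun c _ => by rw [hH c b])
        exact hfd ▸ ((hcomp _ (hpdd b) t).mul_const (u b))
      have hsum := HasDerivAt.fun_sum (A := fun b s => partialDeriv' n b τ (γ s) * u b)
        (fun b (_ : b ∈ Finset.univ) => hb b)
      have hQeq : Q = ∑ b, (∑ c, Hm c b * u c) * u b := by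
        rw [hQ, Finset.sum_comm]
        exact Finset.sum_congr rfl (fun b _ => by rw [Finset.sum_mul])
      have key : HasDerivAt (fun s => ∑ b, partialDeriv' n b τ (γ s) * u b) Q t := by
        rw [hQeq]; exact hsum
      have h1 : (fun s => fderiv ℝ τ (γ s) u) = fun s => ∑ b, partialDeriv' n b τ (γ s) * u b :=
        funext fun s => L1 n τ (γ s) u
      rw [h1]; exact key
    have hmain : ∀ t : ℝ, HasDerivAt
        (fun s => τ (γ s) * Q - (1/2) * (fderiv ℝ τ (γ s) u) ^ 2) 0 t := by
      intro t
      have hA := (hcomp τ hτd t).mul_const Q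
      have hB := ((hP t).pow 2).const_mul (1/2 : ℝ)
      have hAB := hA.sub hB
      have : fderiv ℝ τ (γ t) u * Q - (1/2 : ℝ) * (2 * fderiv ℝ τ (γ t) u ^ (2-1) * Q) = 0 := by
        ring
      rw [← this]
      exact hAB
    refine ⟨τ (γ 0) * Q - (1/2) * (fderiv ℝ τ (γ 0) u) ^ 2, ?_⟩
    intro t
    have hconst := is_const_of_deriv_eq_zero
      (f := fun s => τ (γ s) * Q - (1/2) * (fderiv ℝ τ (γ s) u) ^ 2)
      (fun s => (hmain s).differentiableAt) (fun s => (hmain s).deriv) t 0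
    have hQg : (∑ b, ∑ c, partialDeriv' n b (partialDeriv' n c τ) (x₀ + t • u) * u b * u c) = Q := by
      rw [hQ]
      exact Finset.sum_congr rfl (fun b _ => Finset.sum_congr rfl (fun c _ => by rw [hH b c]))
    have hPg : (∑ b, partialDeriv' n b τ (x₀ + t • u) * u b) = fderiv ℝ τ (γ t) u :=
      (L1 n τ (γ t) u).symm
    rw [hQg, hPg]
    exact hconst
end

section
/- Let n ≥ 3 and let k be a smooth field of antisymmetric bilinear forms (2-forms) on Euclidean ℝⁿ, with components k_{bc} = −k_{cb}, satisfying the flat conformal Killing–Yano equation: ∂_a k_{bc} = ∂_{[a}k_{bc]} + (1/(n−1))(δ_{ab} μ_c − δ_{ac} μ_b), where μ_c := Σ_p ∂_p k_{pc} and square brackets denote total antisymmetrisation. Then for every unit-speed flat conformal circle γ : I → ℝⁿ, the function t ↦ k(γ(t))(γ'(t), γ''(t)) − (1/(n−1)) μ(γ(t))(γ'(t)) is constant on I. -/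
/-- The partial derivative `∂_p f` of a function `f : ℝⁿ → ℝ` on Euclidean space in the
`p`-th coordinate direction. -/
noncomputable def epd (n : ℕ) (p : Fin n) (f : EuclideanSpace ℝ (Fin n) → ℝ) :
    EuclideanSpace ℝ (Fin n) → ℝ :=
  fun x => fderiv ℝ f x (EuclideanSpace.single p 1)

namespace CKY

variable {n : ℕ}

lemma epd_smooth {f : EuclideanSpace ℝ (Fin n) → ℝ} (hf : ContDiff ℝ (⊤ : ℕ∞) f) (p : Fin n) :
    ContDiff ℝ (⊤ : ℕ∞) (epd n p f) := by
  unfold epd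
  exact (hf.fderiv_right (m := (⊤ : ℕ∞)) (by simp)).clm_apply contDiff_const

lemma epd_fun_neg {f : EuclideanSpace ℝ (Fin n) → ℝ} {x} (p : Fin n) :
    epd n p (fun y => -f y) x = -epd n p f x := by
  simp [epd, fderiv_neg]

lemma epd_fun_sum {ι : Type*} {s : Finset ι} {f : ι → EuclideanSpace ℝ (Fin n) → ℝ} {x} (p : Fin n)
    (hf : ∀ i ∈ s, DifferentiableAt ℝ (f i) x) :
    epd n p (fun y => ∑ i ∈ s, f i y) x = ∑ i ∈ s, epd n p (f i) x := by
  simp [epd, fderiv_fun_sum hf]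

lemma epd_comm {f : EuclideanSpace ℝ (Fin n) → ℝ} (hf : ContDiff ℝ (⊤ : ℕ∞) f) (a b : Fin n)
    (x : EuclideanSpace ℝ (Fin n)) :
    epd n a (epd n b f) x = epd n b (epd n a f) x := by
  have hd : ∀ y, HasFDerivAt f (fderiv ℝ f y) y := fun y => (hf.differentiable (by simp) y).hasFDerivAt
  have h2 : Differentiable ℝ (fderiv ℝ f) := (hf.fderiv_right (m := (⊤ : ℕ∞)) (by simp)).differentiable (by simp)
  have hsymm := second_derivative_symmetric hd ((h2 x).hasFDerivAt)
  have key : ∀ u v : EuclideanSpace ℝ (Fin n),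
      fderiv ℝ (fun y => fderiv ℝ f y v) x u = fderiv ℝ (fderiv ℝ f) x u v := by
    intro u v
    rw [fderiv_clm_apply (h2 x) (differentiableAt_const v)]
    simp
  show fderiv ℝ (fun y => fderiv ℝ f y _) x _ = fderiv ℝ (fun y => fderiv ℝ f y _) x _
  rw [key, key, hsymm]

/-- Linearity of `epd` on the particular combination appearing in the CKY identity. -/
lemma epd_fun_combo {x : EuclideanSpace ℝ (Fin n)} (p : Fin n) (c₁ c₂ e₁ e₂ : ℝ)
    {g₁ g₂ g₃ h₁ h₂ : EuclideanSpace ℝ (Fin n) → ℝ}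
    (dg₁ : DifferentiableAt ℝ g₁ x) (dg₂ : DifferentiableAt ℝ g₂ x)
    (dg₃ : DifferentiableAt ℝ g₃ x) (dh₁ : DifferentiableAt ℝ h₁ x)
    (dh₂ : DifferentiableAt ℝ h₂ x) :
    epd n p (fun y => c₁ * (g₁ y + g₂ y + g₃ y) + c₂ * (e₁ * h₁ y - e₂ * h₂ y)) x
      = c₁ * (epd n p g₁ x + epd n p g₂ x + epd n p g₃ x)
        + c₂ * (e₁ * epd n p h₁ x - e₂ * epd n p h₂ x) := by
  have H : HasFDerivAt
      (fun y => c₁ * (g₁ y + g₂ y + g₃ y) + c₂ * (e₁ * h₁ y - e₂ * h₂ y))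
      (c₁ • ((fderiv ℝ g₁ x + fderiv ℝ g₂ x) + fderiv ℝ g₃ x)
        + c₂ • (e₁ • fderiv ℝ h₁ x - e₂ • fderiv ℝ h₂ x)) x := by
    exact (((dg₁.hasFDerivAt.add dg₂.hasFDerivAt).add dg₃.hasFDerivAt).const_mul c₁).add
      ((((dh₁.hasFDerivAt.const_mul e₁)).sub (dh₂.hasFDerivAt.const_mul e₂)).const_mul c₂)
  unfold epd
  rw [H.fderiv]
  simp [mul_add, mul_sub]


lemma contDiff_deriv' {E : Type*} [NormedAddCommGroup E] [NormedSpace ℝ E] {f : ℝ → E}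
    (hf : ContDiff ℝ (⊤ : ℕ∞) f) : ContDiff ℝ (⊤ : ℕ∞) (deriv f) := by
  have h : ContDiff ℝ (⊤ : ℕ∞) fun t => fderiv ℝ f t 1 :=
    (hf.fderiv_right (m := (⊤ : ℕ∞)) (by simp)).clm_apply contDiff_const
  have he : deriv f = fun t => fderiv ℝ f t 1 := funext fun t => fderiv_apply_one_eq_deriv.symm
  rw [he]
  exact h

lemma sum_antisym {m : ℕ} (f : Fin m → Fin m → ℝ) (hf : ∀ a b, f a b = -f b a) :
    ∑ a, ∑ b, f a b = 0 := by
  have h1 : (∑ a, ∑ b, f a b) = ∑ a, ∑ b, f b a := Finset.sum_comm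
  have h2 : (∑ a, ∑ b, f b a) = -∑ a, ∑ b, f a b := by
    rw [← Finset.sum_neg_distrib]
    refine Finset.sum_congr rfl fun a _ => ?_
    rw [← Finset.sum_neg_distrib]
    exact Finset.sum_congr rfl fun b _ => (hf b a)
  linarith [h1.trans h2]

lemma A_antisym (n : ℕ) (hn : 3 ≤ n)
    (k : EuclideanSpace ℝ (Fin n) → Fin n → Fin n → ℝ)
    (hksmooth : ∀ b c, ContDiff ℝ (⊤ : ℕ∞) fun x => k x b c)
    (hkskew : ∀ x b c, k x b c = -k x c b)
    (μ : EuclideanSpace ℝ (Fin n) → Fin n → ℝ)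
    (hμ : ∀ x c, μ x c = ∑ p, epd n p (fun y => k y p c) x)
    (hCKY : ∀ (x : EuclideanSpace ℝ (Fin n)) (a b c : Fin n),
      epd n a (fun y => k y b c) x =
        (1 / 3) * (epd n a (fun y => k y b c) x + epd n b (fun y => k y c a) x
            + epd n c (fun y => k y a b) x)
          + (1 / ((n : ℝ) - 1)) *
            ((if a = b then (1 : ℝ) else 0) * μ x c - (if a = c then (1 : ℝ) else 0) * μ x b)) :
    ∀ (x : EuclideanSpace ℝ (Fin n)) (a b : Fin n),
      epd n a (fun y => μ y b) x + epd n b (fun y => μ y a) x = 0 := by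
  have hDsm : ∀ (p b c : Fin n), ContDiff ℝ (⊤ : ℕ∞) (epd n p fun y => k y b c) :=
    fun p b c => epd_smooth (hksmooth b c) p
  have hDdiff : ∀ (p b c : Fin n) x, DifferentiableAt ℝ (epd n p fun y => k y b c) x :=
    fun p b c x => (hDsm p b c).differentiable (by simp) x
  have hμfun : ∀ b, (fun y => μ y b) = fun y => ∑ p, epd n p (fun z => k z p b) y :=
    fun b => funext fun y => hμ y b
  have hμsm : ∀ b, ContDiff ℝ (⊤ : ℕ∞) fun y => μ y b := by
    intro b; rw [hμfun b]; exact ContDiff.sum fun p _ => hDsm p p b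
  have hμdiff : ∀ (b : Fin n) x, DifferentiableAt ℝ (fun y => μ y b) x :=
    fun b x => (hμsm b).differentiable (by simp) x
  have hDneg : ∀ (p b c : Fin n),
      (epd n p fun y => k y b c) = fun x => -(epd n p (fun y => k y c b) x) := by
    intro p b c
    funext x
    rw [show (fun y => k y b c) = fun y => -(k y c b) from funext fun y => hkskew y b c]
    exact epd_fun_neg p
  have hAfun : ∀ x (a b : Fin n), epd n a (fun y => μ y b) x
      = ∑ p, epd n a (epd n p fun z => k z p b) x := by
    intro x a b
    rw [hμfun b]
    exact epd_fun_sum a fun p _ => hDdiff p p b x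
  have hAcomm : ∀ x (a b : Fin n), epd n a (fun y => μ y b) x
      = ∑ p, epd n p (epd n a fun z => k z p b) x := by
    intro x a b
    rw [hAfun x a b]
    exact Finset.sum_congr rfl fun p _ => epd_comm (hksmooth p b) a p x
  have hdiv : ∀ x, ∑ p, epd n p (fun y => μ y p) x = 0 := by
    intro x
    rw [show (∑ p, epd n p (fun y => μ y p) x)
        = ∑ p, ∑ q, epd n p (epd n q fun z => k z q p) x
      from Finset.sum_congr rfl fun p _ => hAfun x p p]
    refine sum_antisym _ fun p q => ?_
    rw [hDneg p p q, epd_fun_neg q, epd_comm (hksmooth q p) q p x, neg_neg]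
  have main : ∀ x (a b : Fin n), epd n a (fun y => μ y b) x
      = (1/3) * (epd n a (fun y => μ y b) x + (∑ p, epd n p (epd n p fun z => k z b a) x)
          - epd n b (fun y => μ y a) x)
        + (1/((n:ℝ)-1)) * epd n a (fun y => μ y b) x := by
    intro x a b
    have hterm : ∀ p : Fin n, epd n p (epd n a fun z => k z p b) x
        = (1/3) * (epd n p (epd n a fun z => k z p b) x + epd n p (epd n p fun z => k z b a) x
            + epd n p (epd n b fun z => k z a p) x)
          + (1/((n:ℝ)-1)) * ((if a = p then (1:ℝ) else 0) * epd n p (fun y => μ y b) x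
              - (if a = b then (1:ℝ) else 0) * epd n p (fun y => μ y p) x) := by
      intro p
      conv_lhs => rw [show (epd n a fun z => k z p b)
        = fun y => (1/3) * ((epd n a fun z => k z p b) y + (epd n p fun z => k z b a) y
            + (epd n b fun z => k z a p) y)
          + (1/((n:ℝ)-1)) * ((if a = p then (1:ℝ) else 0) * μ y b
              - (if a = b then (1:ℝ) else 0) * μ y p)
        from funext fun y => hCKY y a p b]
      exact epd_fun_combo p _ _ _ _ (hDdiff a p b x) (hDdiff p b a x) (hDdiff b a p x)
        (hμdiff b x) (hμdiff p x)
    have h3 : ∑ p, epd n p (epd n b fun z => k z a p) x = -(epd n b (fun y => μ y a) x) := by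
      rw [hAfun x b a, ← Finset.sum_neg_distrib]
      refine Finset.sum_congr rfl fun p _ => ?_
      rw [epd_comm (hksmooth a p) p b x, hDneg p a p, epd_fun_neg b]
    have h4 : ∑ p, (if a = p then (1:ℝ) else 0) * epd n p (fun y => μ y b) x
        = epd n a (fun y => μ y b) x := by
      simp [ite_mul]
    calc epd n a (fun y => μ y b) x = ∑ p, epd n p (epd n a fun z => k z p b) x := hAcomm x a b
      _ = ∑ p, ((1/3) * (epd n p (epd n a fun z => k z p b) x
              + epd n p (epd n p fun z => k z b a) x
              + epd n p (epd n b fun z => k z a p) x)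
            + (1/((n:ℝ)-1)) * ((if a = p then (1:ℝ) else 0) * epd n p (fun y => μ y b) x
              - (if a = b then (1:ℝ) else 0) * epd n p (fun y => μ y p) x)) :=
        Finset.sum_congr rfl fun p _ => hterm p
      _ = (1/3) * ((∑ p, epd n p (epd n a fun z => k z p b) x)
              + (∑ p, epd n p (epd n p fun z => k z b a) x)
              + (∑ p, epd n p (epd n b fun z => k z a p) x))
            + (1/((n:ℝ)-1)) * ((∑ p, (if a = p then (1:ℝ) else 0) * epd n p (fun y => μ y b) x)
              - (if a = b then (1:ℝ) else 0) * ∑ p, epd n p (fun y => μ y p) x) := by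
        simp only [Finset.sum_add_distrib, Finset.sum_sub_distrib, ← Finset.mul_sum]
      _ = _ := by
        rw [← hAcomm x a b, h3, h4, hdiv x]
        ring
  intro x a b
  have E1 := main x a b
  have E2 := main x b a
  have hLneg : (∑ p, epd n p (epd n p fun z => k z a b) x)
      = -∑ p, epd n p (epd n p fun z => k z b a) x := by
    rw [← Finset.sum_neg_distrib]
    refine Finset.sum_congr rfl fun p _ => ?_
    rw [hDneg p a b, epd_fun_neg p]
  rw [hLneg] at E2
  have h3 : (3:ℝ) ≤ (n:ℝ) := by exact_mod_cast hn
  have hclt : 1/((n:ℝ)-1) ≤ 1/2 := by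
    apply one_div_le_one_div_of_le <;> linarith
  set A1 := epd n a (fun y => μ y b) x
  set A2 := epd n b (fun y => μ y a) x
  set L := ∑ p, epd n p (epd n p fun z => k z b a) x
  set c1 := 1/((n:ℝ)-1) with hc1
  have hs : A1 + A2 = c1 * (A1 + A2) := by
    have : c1 * A1 + c1 * A2 = c1 * (A1 + A2) := by ring
    linarith [E1, E2, this]
  have h0 : (1 - c1) * (A1 + A2) = 0 := by linear_combination hs
  rcases mul_eq_zero.mp h0 with h | h
  · linarith
  · linarith


lemma fderiv_apply_eq_sum {f : EuclideanSpace ℝ (Fin n) → ℝ} {x : EuclideanSpace ℝ (Fin n)}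
    (v : EuclideanSpace ℝ (Fin n)) :
    fderiv ℝ f x v = ∑ a, v a * epd n a f x := by
  have hv : v = ∑ a, v a • EuclideanSpace.single a (1 : ℝ) := by
    apply PiLp.ext
    intro i
    rw [show (∑ a, v a • EuclideanSpace.single a (1 : ℝ)) i
        = EuclideanSpace.proj (𝕜 := ℝ) i (∑ a, v a • EuclideanSpace.single a (1 : ℝ)) from rfl,
      map_sum]
    simp [EuclideanSpace.single_apply]
  conv_lhs => rw [hv]
  rw [map_sum]
  simp [epd]

lemma main_alg (n : ℕ) (hn : 3 ≤ n) (kx : Fin n → Fin n → ℝ)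
    (hkx : ∀ b c, kx b c = -kx c b)
    (D : Fin n → Fin n → Fin n → ℝ) (hDskew : ∀ a b c, D a b c = -D a c b)
    (μx : Fin n → ℝ) (A : Fin n → Fin n → ℝ) (hA : ∀ a b, A a b = -A b a)
    (hCKYx : ∀ a b c, D a b c = (1/3) * (D a b c + D b c a + D c a b)
      + (1/((n:ℝ)-1)) * ((if a = b then (1:ℝ) else 0) * μx c - (if a = c then (1:ℝ) else 0) * μx b))
    (v w : Fin n → ℝ) (r : ℝ) (hv1 : ∑ a, v a ^ 2 = 1) (hvw : ∑ a, v a * w a = 0) :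
    (∑ b, ∑ c, (((∑ a, v a * D a b c) * v b + kx b c * w b) * w c
        + (kx b c * v b) * (-r * v c)))
      - (1/((n:ℝ)-1)) * (∑ b, ((∑ a, v a * A a b) * v b + μx b * w b)) = 0 := by
  set c1 : ℝ := 1/((n:ℝ)-1) with hc1
  -- the three pieces of the k-part
  have e2 : ∑ b, ∑ c, kx b c * w b * w c = 0 :=
    sum_antisym _ (fun b c => by rw [hkx b c]; ring)
  have e3 : ∑ b, ∑ c, kx b c * v b * v c = 0 :=
    sum_antisym _ (fun b c => by rw [hkx b c]; ring)
  have e4 : ∑ a, ∑ b, v a * A a b * v b = 0 :=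
    sum_antisym _ (fun a b => by rw [hA a b]; ring)
  -- main term
  set M := ∑ a, ∑ b, ∑ c, D a b c * (v a * v b * w c) with hMdef
  have hM2 : ∑ a, ∑ b, ∑ c, D b c a * (v a * v b * w c) = -M := by
    rw [Finset.sum_comm]
    rw [hMdef, ← Finset.sum_neg_distrib]
    refine Finset.sum_congr rfl fun b _ => ?_
    rw [← Finset.sum_neg_distrib]
    refine Finset.sum_congr rfl fun a _ => ?_
    rw [← Finset.sum_neg_distrib]
    refine Finset.sum_congr rfl fun c _ => ?_
    rw [hDskew b a c]  -- D b a c = - D b c a; want D b c a * ... = -(D b a c * ...)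
    ring
  have hM3 : ∑ a, ∑ b, ∑ c, D c a b * (v a * v b * w c) = 0 := by
    refine sum_antisym (fun a b => ∑ c, D c a b * (v a * v b * w c)) fun a b => ?_
    rw [← Finset.sum_neg_distrib]
    refine Finset.sum_congr rfl fun c _ => ?_
    rw [hDskew c a b]
    ring
  have hP1 : ∑ a, ∑ b, ∑ c, ((if a = b then (1:ℝ) else 0) * μx c) * (v a * v b * w c)
      = ∑ c, μx c * w c := by
    have h : ∀ a : Fin n, ∑ b, ∑ c, ((if a = b then (1:ℝ) else 0) * μx c) * (v a * v b * w c)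
        = v a ^ 2 * ∑ c, μx c * w c := by
      intro a
      rw [Finset.sum_eq_single a]
      · rw [Finset.mul_sum]
        refine Finset.sum_congr rfl fun c _ => by simp; ring
      · intro b _ hb
        refine Finset.sum_eq_zero fun c _ => by simp [Ne.symm hb]
      · simp
    simp only [h]
    rw [← Finset.sum_mul, hv1, one_mul]
  have hP2 : ∑ a, ∑ b, ∑ c, ((if a = c then (1:ℝ) else 0) * μx b) * (v a * v b * w c) = 0 := by
    have h : ∀ a : Fin n, ∑ b, ∑ c, ((if a = c then (1:ℝ) else 0) * μx b) * (v a * v b * w c)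
        = (v a * w a) * ∑ b, μx b * v b := by
      intro a
      rw [Finset.mul_sum]
      refine Finset.sum_congr rfl fun b _ => ?_
      rw [Finset.sum_eq_single a]
      · simp; ring
      · intro c _ hc; simp [Ne.symm hc]
      · simp
    simp only [h]
    rw [← Finset.sum_mul, hvw, zero_mul]
  have key : M = (1/3) * (M + (∑ a, ∑ b, ∑ c, D b c a * (v a * v b * w c))
        + (∑ a, ∑ b, ∑ c, D c a b * (v a * v b * w c)))
      + c1 * ((∑ a, ∑ b, ∑ c, ((if a = b then (1:ℝ) else 0) * μx c) * (v a * v b * w c))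
        - (∑ a, ∑ b, ∑ c, ((if a = c then (1:ℝ) else 0) * μx b) * (v a * v b * w c))) := by
    calc M = ∑ a, ∑ b, ∑ c, ((1/3) * (D a b c * (v a * v b * w c) + D b c a * (v a * v b * w c)
            + D c a b * (v a * v b * w c))
        + c1 * (((if a = b then (1:ℝ) else 0) * μx c) * (v a * v b * w c)
            - ((if a = c then (1:ℝ) else 0) * μx b) * (v a * v b * w c))) := by
          rw [hMdef]
          refine Finset.sum_congr rfl fun a _ => Finset.sum_congr rfl fun b _ =>
            Finset.sum_congr rfl fun c _ => ?_
          conv_lhs => rw [hCKYx a b c]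
          ring
      _ = _ := by
          simp only [Finset.sum_add_distrib, Finset.sum_sub_distrib, ← Finset.mul_sum]
          rw [hMdef]
  have hMval : M = c1 * ∑ c, μx c * w c := by
    rw [hM2, hM3, hP1, hP2] at key
    linarith
  -- now reassemble the full expression
  have hs : ∀ b c, (∑ a, v a * D a b c) * v b * w c = ∑ a, D a b c * (v a * v b * w c) := by
    intro b c
    rw [Finset.sum_mul, Finset.sum_mul]
    exact Finset.sum_congr rfl fun a _ => by ring
  have h1 : ∀ b c, (((∑ a, v a * D a b c) * v b + kx b c * w b) * w c
        + (kx b c * v b) * (-r * v c))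
      = (∑ a, D a b c * (v a * v b * w c)) + kx b c * w b * w c
        + (-r) * (kx b c * v b * v c) := by
    intro b c
    rw [← hs b c]
    ring
  have hMswap : ∑ b, ∑ c, ∑ a, D a b c * (v a * v b * w c) = M := by
    rw [hMdef,
      show (∑ b, ∑ c, ∑ a, D a b c * (v a * v b * w c))
          = ∑ b, ∑ a, ∑ c, D a b c * (v a * v b * w c)
        from Finset.sum_congr rfl fun b _ => Finset.sum_comm]
    exact Finset.sum_comm
  have hsplit : ∑ b, ∑ c, (((∑ a, v a * D a b c) * v b + kx b c * w b) * w c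
        + (kx b c * v b) * (-r * v c))
      = M + (∑ b, ∑ c, kx b c * w b * w c) + (-r) * ∑ b, ∑ c, kx b c * v b * v c := by
    simp only [h1]
    simp only [Finset.sum_add_distrib, ← Finset.mul_sum]
    rw [hMswap]
  have h5 : ∑ b, ((∑ a, v a * A a b) * v b + μx b * w b)
      = (∑ a, ∑ b, v a * A a b * v b) + ∑ b, μx b * w b := by
    rw [Finset.sum_add_distrib]
    congr 1
    rw [Finset.sum_comm]
    exact Finset.sum_congr rfl fun b _ => by rw [Finset.sum_mul]
  rw [hsplit, hMval, e2, e3, h5, e4]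
  ring


end CKY


/-- Let `n ≥ 3` and let `k` be a smooth field of 2-forms on Euclidean
`ℝⁿ` satisfying the flat conformal Killing–Yano equation
`∂_a k_{bc} = ∂_{[a} k_{bc]} + (1/(n−1)) (δ_{ab} μ_c − δ_{ac} μ_b)`, where
`μ_c := ∑_p ∂_p k_{pc}`. Then for every unit-speed flat conformal circle `γ : I → ℝⁿ`
(i.e. `‖γ'‖ = 1` and `γ''' = −‖γ''‖² γ'` on the open interval `I`), the function
`t ↦ k(γ t)(γ' t, γ'' t) − (1/(n−1)) μ(γ t)(γ' t)` is constant on `I`. -/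
theorem cky_two_form_conformal_circle_first_integral_flat
    (n : ℕ) (hn : 3 ≤ n)
    (k : EuclideanSpace ℝ (Fin n) → Fin n → Fin n → ℝ)
    (hksmooth : ∀ b c, ContDiff ℝ (⊤ : ℕ∞) fun x => k x b c)
    (hkskew : ∀ x b c, k x b c = -k x c b)
    (μ : EuclideanSpace ℝ (Fin n) → Fin n → ℝ)
    (hμ : ∀ x c, μ x c = ∑ p, epd n p (fun y => k y p c) x)
    (hCKY : ∀ (x : EuclideanSpace ℝ (Fin n)) (a b c : Fin n),
      epd n a (fun y => k y b c) x =
        (1 / 3) * (epd n a (fun y => k y b c) x + epd n b (fun y => k y c a) x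
            + epd n c (fun y => k y a b) x)
          + (1 / ((n : ℝ) - 1)) *
            ((if a = b then (1 : ℝ) else 0) * μ x c - (if a = c then (1 : ℝ) else 0) * μ x b))
    (I : Set ℝ) (hI : IsOpen I) (hI' : I.OrdConnected)
    (γ : ℝ → EuclideanSpace ℝ (Fin n)) (hγ : ContDiff ℝ (⊤ : ℕ∞) γ)
    (hunit : ∀ t ∈ I, ‖deriv γ t‖ = 1)
    (hcc : ∀ t ∈ I,
      deriv (deriv (deriv γ)) t = -‖deriv (deriv γ) t‖ ^ 2 • deriv γ t) :
    ∃ C : ℝ, ∀ t ∈ I,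
      (∑ b, ∑ c, k (γ t) b c * deriv γ t b * deriv (deriv γ) t c)
        - (1 / ((n : ℝ) - 1)) * (∑ b, μ (γ t) b * deriv γ t b) = C := by
  classical
  rcases Set.eq_empty_or_nonempty I with hIe | ⟨t₀, ht₀⟩
  · exact ⟨0, fun t ht => absurd ht (by simp [hIe])⟩
  have hγd : Differentiable ℝ γ := hγ.differentiable (by simp)
  have hγ1 : ContDiff ℝ (⊤ : ℕ∞) (deriv γ) := CKY.contDiff_deriv' hγ
  have hγ2 : ContDiff ℝ (⊤ : ℕ∞) (deriv (deriv γ)) := CKY.contDiff_deriv' hγ1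
  have hv : ∀ (t : ℝ) (b : Fin n),
      HasDerivAt (fun t => deriv γ t b) (deriv (deriv γ) t b) t := by
    intro t b
    have h := (EuclideanSpace.proj (𝕜 := ℝ) b).hasFDerivAt.comp_hasDerivAt t
      ((hγ1.differentiable (by simp) t).hasDerivAt)
    simpa [Function.comp_def] using h
  have hw : ∀ (t : ℝ) (c : Fin n),
      HasDerivAt (fun t => deriv (deriv γ) t c) (deriv (deriv (deriv γ)) t c) t := by
    intro t c
    have h := (EuclideanSpace.proj (𝕜 := ℝ) c).hasFDerivAt.comp_hasDerivAt t
      ((hγ2.differentiable (by simp) t).hasDerivAt)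
    simpa [Function.comp_def] using h
  have hcomp : ∀ (f : EuclideanSpace ℝ (Fin n) → ℝ), ContDiff ℝ (⊤ : ℕ∞) f → ∀ t : ℝ,
      HasDerivAt (fun t => f (γ t)) (∑ a, deriv γ t a * epd n a f (γ t)) t := by
    intro f hf t
    have h := ((hf.differentiable (by simp) (γ t)).hasFDerivAt).comp_hasDerivAt t (hγd t).hasDerivAt
    rw [CKY.fderiv_apply_eq_sum] at h
    exact h
  have hμsm : ∀ b, ContDiff ℝ (⊤ : ℕ∞) fun y => μ y b := by
    intro b
    rw [show (fun y => μ y b) = fun y => ∑ p, epd n p (fun z => k z p b) y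
      from funext fun y => hμ y b]
    exact ContDiff.sum fun p _ => CKY.epd_smooth (hksmooth p b) p
  have hA := CKY.A_antisym n hn k hksmooth hkskew μ hμ hCKY
  have hsum1 : ∀ t ∈ I, ∑ a, (deriv γ t a) ^ 2 = 1 := by
    intro t ht
    have h := hunit t ht
    rw [EuclideanSpace.norm_eq, Real.sqrt_eq_one] at h
    simpa [Real.norm_eq_abs, sq_abs] using h
  have horth : ∀ t ∈ I, ∑ a, deriv γ t a * deriv (deriv γ) t a = 0 := by
    intro t ht
    have hg : HasDerivAt (fun t => ∑ a, (deriv γ t a) ^ 2)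
        (∑ a : Fin n, 2 * deriv γ t a ^ 1 * deriv (deriv γ) t a) t :=
      HasDerivAt.fun_sum fun a _ => (hv t a).fun_pow 2
    have he : (fun t => ∑ a, (deriv γ t a) ^ 2) =ᶠ[nhds t] fun _ => (1 : ℝ) := by
      filter_upwards [hI.mem_nhds ht] with s hs using hsum1 s hs
    have h0 : (∑ a : Fin n, 2 * deriv γ t a ^ 1 * deriv (deriv γ) t a) = 0 := by
      rw [← hg.deriv, he.deriv_eq, deriv_const]
    have h1 : (∑ a : Fin n, 2 * deriv γ t a ^ 1 * deriv (deriv γ) t a)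
        = 2 * ∑ a, deriv γ t a * deriv (deriv γ) t a := by
      rw [Finset.mul_sum]
      exact Finset.sum_congr rfl fun a _ => by ring
    rw [h1] at h0
    linarith
  -- derivative of F
  have hder : ∀ t : ℝ, HasDerivAt
      (fun t => (∑ b, ∑ c, k (γ t) b c * deriv γ t b * deriv (deriv γ) t c)
        - (1 / ((n : ℝ) - 1)) * (∑ b, μ (γ t) b * deriv γ t b))
      ((∑ b, ∑ c, (((∑ a, deriv γ t a * epd n a (fun y => k y b c) (γ t)) * deriv γ t b
            + k (γ t) b c * deriv (deriv γ) t b) * deriv (deriv γ) t c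
          + (k (γ t) b c * deriv γ t b) * deriv (deriv (deriv γ)) t c))
        - (1 / ((n : ℝ) - 1)) * (∑ b,
            ((∑ a, deriv γ t a * epd n a (fun y => μ y b) (γ t)) * deriv γ t b
              + μ (γ t) b * deriv (deriv γ) t b))) t := by
    intro t
    refine HasDerivAt.sub ?_ (HasDerivAt.const_mul _ ?_)
    · exact HasDerivAt.fun_sum fun b _ => HasDerivAt.fun_sum fun c _ =>
        ((hcomp (fun y => k y b c) (hksmooth b c) t).fun_mul (hv t b)).fun_mul (hw t c)
    · exact HasDerivAt.fun_sum fun b _ =>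
        (hcomp (fun y => μ y b) (hμsm b) t).fun_mul (hv t b)
  have hzero : ∀ t ∈ I, HasDerivAt
      (fun t => (∑ b, ∑ c, k (γ t) b c * deriv γ t b * deriv (deriv γ) t c)
        - (1 / ((n : ℝ) - 1)) * (∑ b, μ (γ t) b * deriv γ t b)) 0 t := by
    intro t ht
    have h := hder t
    have hu : ∀ c : Fin n, deriv (deriv (deriv γ)) t c
        = -‖deriv (deriv γ) t‖ ^ 2 * deriv γ t c := by
      intro c
      rw [hcc t ht]
      rfl
    have hval : ((∑ b, ∑ c, (((∑ a, deriv γ t a * epd n a (fun y => k y b c) (γ t)) * deriv γ t b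
            + k (γ t) b c * deriv (deriv γ) t b) * deriv (deriv γ) t c
          + (k (γ t) b c * deriv γ t b) * deriv (deriv (deriv γ)) t c))
        - (1 / ((n : ℝ) - 1)) * (∑ b,
            ((∑ a, deriv γ t a * epd n a (fun y => μ y b) (γ t)) * deriv γ t b
              + μ (γ t) b * deriv (deriv γ) t b))) = 0 := by
      simp only [hu]
      exact CKY.main_alg n hn (k (γ t)) (hkskew (γ t))
        (fun a b c => epd n a (fun y => k y b c) (γ t))
        (fun a b c => by
          show epd n a (fun y => k y b c) (γ t) = -epd n a (fun y => k y c b) (γ t)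
          rw [show (fun y => k y b c) = fun y => -(k y c b) from funext fun y => hkskew y b c]
          exact CKY.epd_fun_neg a)
        (μ (γ t))
        (fun a b => epd n a (fun y => μ y b) (γ t))
        (fun a b => by
          show epd n a (fun y => μ y b) (γ t) = -epd n b (fun y => μ y a) (γ t)
          have := hA (γ t) a b; linarith)
        (fun a b c => hCKY (γ t) a b c)
        (fun a => deriv γ t a) (fun c => deriv (deriv γ) t c)
        (‖deriv (deriv γ) t‖ ^ 2) (hsum1 t ht) (horth t ht)
    rw [hval] at h
    exact h
  -- constancy
  have hconv : Convex ℝ I := hI'.convex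
  refine ⟨(∑ b, ∑ c, k (γ t₀) b c * deriv γ t₀ b * deriv (deriv γ) t₀ c)
    - (1 / ((n : ℝ) - 1)) * (∑ b, μ (γ t₀) b * deriv γ t₀ b), fun t ht => ?_⟩
  refine hconv.is_const_of_fderivWithin_eq_zero
    (fun s hs => ((hzero s hs).differentiableAt).differentiableWithinAt) ?_ ht ht₀
  intro s hs
  rw [fderivWithin_of_isOpen hI hs]
  have := (hzero s hs).hasFDerivAt.fderiv
  rw [this]
  ext u
  simp
end

section
/- Let τ : ℝⁿ → ℝ be a smooth function whose third derivatives satisfy ∂_a∂_b∂_c τ = (3/(n+2)) δ_{(ab} ∂_{c)} Δτ for all indices, i.e. the trace-free part of the (totally symmetric) third-derivative tensor of τ vanishes (the flat case of the conformal first BGG equation ∇_{(a}∇_b∇_{c)₀}τ + 4P_{(ab}∇_{c)₀}τ + 2τ∇_{(a}P_{bc)₀} = 0). Then for every unit-speed flat conformal circle γ : I → ℝⁿ, the function t ↦ ½ Hess τ(γ(t))(γ'(t), γ'(t)) − (3/(2(n+2))) Δτ(γ(t)) − ⟨∇τ(γ(t)), γ''(t)⟩ − |γ''(t)|² τ(γ(t))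 is constant on I. -/
section Helpers

variable {n : ℕ}

lemma esum (v : EuclideanSpace ℝ (Fin n)) (L : EuclideanSpace ℝ (Fin n) →L[ℝ] ℝ) :
    L v = ∑ a, v a * L (EuclideanSpace.single a 1) := by
  have hv : ∑ a, v a • EuclideanSpace.single a (1:ℝ) = v := by
    have := (EuclideanSpace.basisFun (Fin n) ℝ).sum_repr v
    simpa [EuclideanSpace.basisFun_apply, EuclideanSpace.basisFun_repr] using this
  conv_lhs => rw [← hv]
  simp [smul_eq_mul]

lemma epd_contDiff {f : EuclideanSpace ℝ (Fin n) → ℝ} (hf : ContDiff ℝ (⊤ : ℕ∞) f) (p : Fin n) :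
    ContDiff ℝ (⊤ : ℕ∞) (epd n p f) :=
  (hf.fderiv_right (by simp)).clm_apply contDiff_const

/-- chain rule along a curve, in coordinates -/
lemma hasDerivAt_comp_curve {f : EuclideanSpace ℝ (Fin n) → ℝ} (hf : ContDiff ℝ (⊤ : ℕ∞) f)
    {γ : ℝ → EuclideanSpace ℝ (Fin n)} (hγ : Differentiable ℝ γ) (t : ℝ) :
    HasDerivAt (fun s => f (γ s)) (∑ a, epd n a f (γ t) * deriv γ t a) t := by
  have h1 : HasDerivAt (fun s => f (γ s)) (fderiv ℝ f (γ t) (deriv γ t)) t :=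
    (hf.differentiable (by simp) (γ t)).hasFDerivAt.comp_hasDerivAt t (hγ t).hasDerivAt
  have := esum (deriv γ t) (fderiv ℝ f (γ t))
  rw [this] at h1
  convert h1 using 1
  apply Finset.sum_congr rfl
  intro a _
  simp only [epd]
  ring

/-- components of the derivative of a curve -/
lemma hasDerivAt_comp_apply {c : ℝ → EuclideanSpace ℝ (Fin n)} (hc : Differentiable ℝ c)
    (t : ℝ) (a : Fin n) :
    HasDerivAt (fun s => c s a) (deriv c t a) t := by
  have h1 := ((EuclideanSpace.proj (𝕜 := ℝ) a).hasFDerivAt).comp_hasDerivAt t (hc t).hasDerivAt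
  exact h1

/-- symmetry of second partials -/
lemma epd_comm {f : EuclideanSpace ℝ (Fin n) → ℝ} (hf : ContDiff ℝ (⊤ : ℕ∞) f) (a b : Fin n)
    (x : EuclideanSpace ℝ (Fin n)) :
    epd n a (epd n b f) x = epd n b (epd n a f) x := by
  have hsym : IsSymmSndFDerivAt ℝ f x := (hf.contDiffAt).isSymmSndFDerivAt (by rw [minSmoothness_of_isRCLikeNormedField]; exact WithTop.coe_le_coe.mpr (le_top : (2 : ℕ∞) ≤ ⊤))
  have key : ∀ p q : Fin n, epd n p (epd n q f) x =
      fderiv ℝ (fderiv ℝ f) x (EuclideanSpace.single p 1) (EuclideanSpace.single q 1) := by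
    intro p q
    show fderiv ℝ (fun y => fderiv ℝ f y (EuclideanSpace.single q 1)) x
        (EuclideanSpace.single p 1) = _
    have hdf : DifferentiableAt ℝ (fderiv ℝ f) x :=
      ((hf.fderiv_right (m := 1) (by exact WithTop.coe_le_coe.mpr le_top)).differentiable (by norm_num)) x
    rw [fderiv_clm_apply hdf (differentiableAt_const _)]
    simp
  rw [key a b, key b a, hsym.eq]

lemma normsq (x : EuclideanSpace ℝ (Fin n)) : ∑ a, x a * x a = ‖x‖ ^ 2 := by
  rw [EuclideanSpace.norm_eq, Real.sq_sqrt (by positivity)]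
  exact Finset.sum_congr rfl fun a _ => by
    simp [Real.norm_eq_abs, sq, abs_mul_abs_self]

open Finset in
lemma main_algebra (n : ℕ) (K : ℝ) (T : Fin n → Fin n → Fin n → ℝ) (H : Fin n → Fin n → ℝ)
    (g L u v w : Fin n → ℝ) (τx : ℝ)
    (hT : ∀ a b c, T a b c = K * ((1/3) * ((if a = b then (1:ℝ) else 0) * L c
      + (if b = c then (1:ℝ) else 0) * L a + (if c = a then (1:ℝ) else 0) * L b)))
    (hH : ∀ a b, H a b = H b a)
    (f1 : ∑ a, u a * u a = 1)
    (f2 : ∑ a, u a * v a = 0)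
    (f3 : ∀ a, w a = -(∑ b, v b * v b) * u a) :
    (1/2) * (∑ b, ∑ c, (((∑ a, T a b c * u a) * u b + H b c * v b) * u c + H b c * u b * v c))
      - (K/2) * (∑ a, L a * u a)
      - (∑ b, ((∑ a, H a b * u a) * v b + g b * w b))
      - ((∑ a, (w a * v a + v a * w a)) * τx + (∑ a, v a * v a) * (∑ a, g a * u a)) = 0 := by
  have hY : (∑ b, ∑ c, H b c * v b * u c) = ∑ b, ∑ c, H b c * u b * v c := by
    rw [Finset.sum_comm]
    exact Finset.sum_congr rfl fun b _ => Finset.sum_congr rfl fun c _ => by rw [hH c b]; ring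
  have hCfirst : (∑ b, (∑ a, H a b * u a) * v b) = ∑ b, ∑ c, H b c * u b * v c := by
    calc (∑ b, (∑ a, H a b * u a) * v b) = ∑ b, ∑ a, H a b * u a * v b :=
          Finset.sum_congr rfl fun b _ => Finset.sum_mul _ _ _
      _ = ∑ a, ∑ b, H a b * u a * v b := Finset.sum_comm
  have hgw : (∑ b, g b * w b) = -(∑ b, v b * v b) * (∑ b, g b * u b) := by
    rw [Finset.mul_sum]
    exact Finset.sum_congr rfl fun b _ => by rw [f3 b]; ring
  have hwv : (∑ a, (w a * v a + v a * w a)) = 0 := by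
    calc (∑ a, (w a * v a + v a * w a)) = ∑ a, (u a * v a) * (-(∑ b, v b * v b) * 2) :=
          Finset.sum_congr rfl fun a _ => by rw [f3 a]; ring
      _ = (∑ a, u a * v a) * (-(∑ b, v b * v b) * 2) := (Finset.sum_mul _ _ _).symm
      _ = 0 := by rw [f2]; ring
  have hSA : (∑ b, ∑ c, (((∑ a, T a b c * u a) * u b + H b c * v b) * u c + H b c * u b * v c))
      = (∑ b, ∑ c, ∑ a, T a b c * u a * u b * u c)
        + ((∑ b, ∑ c, H b c * v b * u c) + (∑ b, ∑ c, H b c * u b * v c)) := by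
    have step : ∀ b c, (((∑ a, T a b c * u a) * u b + H b c * v b) * u c + H b c * u b * v c)
        = (∑ a, T a b c * u a * u b * u c) + (H b c * v b * u c + H b c * u b * v c) := by
      intro b c
      rw [show (((∑ a, T a b c * u a) * u b + H b c * v b) * u c + H b c * u b * v c)
          = ((∑ a, T a b c * u a) * u b) * u c + (H b c * v b * u c + H b c * u b * v c) by ring,
        Finset.sum_mul, Finset.sum_mul]
    calc (∑ b, ∑ c, (((∑ a, T a b c * u a) * u b + H b c * v b) * u c + H b c * u b * v c))
        = ∑ b, ∑ c, ((∑ a, T a b c * u a * u b * u c) + (H b c * v b * u c + H b c * u b * v c)) :=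
          Finset.sum_congr rfl fun b _ => Finset.sum_congr rfl fun c _ => step b c
      _ = _ := by simp [Finset.sum_add_distrib]
  have s1 : (∑ b, ∑ c, ∑ a, (if a = b then (1:ℝ) else 0) * (L c * (u a * u b * u c)))
      = ∑ a, L a * u a := by
    have e1 : ∀ b c, (∑ a, (if a = b then (1:ℝ) else 0) * (L c * (u a * u b * u c)))
        = (u b * u b) * (L c * u c) := by
      intro b c
      simp [boole_mul, Finset.sum_ite_eq']
      ring
    calc (∑ b, ∑ c, ∑ a, (if a = b then (1:ℝ) else 0) * (L c * (u a * u b * u c)))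
        = ∑ b, ∑ c, (u b * u b) * (L c * u c) :=
          Finset.sum_congr rfl fun b _ => Finset.sum_congr rfl fun c _ => e1 b c
      _ = ∑ b, (u b * u b) * (∑ c, L c * u c) :=
          Finset.sum_congr rfl fun b _ => (Finset.mul_sum _ _ _).symm
      _ = (∑ b, u b * u b) * (∑ c, L c * u c) := (Finset.sum_mul _ _ _).symm
      _ = ∑ a, L a * u a := by rw [f1, one_mul]
  have s2 : (∑ b, ∑ c, ∑ a, (if b = c then (1:ℝ) else 0) * (L a * (u a * u b * u c)))
      = ∑ a, L a * u a := by
    have e2 : ∀ b, (∑ c, ∑ a, (if b = c then (1:ℝ) else 0) * (L a * (u a * u b * u c)))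
        = (u b * u b) * (∑ a, L a * u a) := by
      intro b
      rw [Finset.sum_comm]
      have inner : ∀ a, (∑ c, (if b = c then (1:ℝ) else 0) * (L a * (u a * u b * u c)))
          = (L a * u a) * (u b * u b) := by
        intro a
        simp [boole_mul, Finset.sum_ite_eq]
        ring
      calc (∑ a, ∑ c, (if b = c then (1:ℝ) else 0) * (L a * (u a * u b * u c)))
          = ∑ a, (L a * u a) * (u b * u b) := Finset.sum_congr rfl fun a _ => inner a
        _ = (∑ a, L a * u a) * (u b * u b) := (Finset.sum_mul _ _ _).symm
        _ = (u b * u b) * (∑ a, L a * u a) := mul_comm _ _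
    calc (∑ b, ∑ c, ∑ a, (if b = c then (1:ℝ) else 0) * (L a * (u a * u b * u c)))
        = ∑ b, (u b * u b) * (∑ a, L a * u a) := Finset.sum_congr rfl fun b _ => e2 b
      _ = (∑ b, u b * u b) * (∑ a, L a * u a) := (Finset.sum_mul _ _ _).symm
      _ = ∑ a, L a * u a := by rw [f1, one_mul]
  have s3 : (∑ b, ∑ c, ∑ a, (if c = a then (1:ℝ) else 0) * (L b * (u a * u b * u c)))
      = ∑ a, L a * u a := by
    have e3 : ∀ b c, (∑ a, (if c = a then (1:ℝ) else 0) * (L b * (u a * u b * u c)))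
        = (L b * u b) * (u c * u c) := by
      intro b c
      simp [boole_mul, Finset.sum_ite_eq]
      ring
    calc (∑ b, ∑ c, ∑ a, (if c = a then (1:ℝ) else 0) * (L b * (u a * u b * u c)))
        = ∑ b, ∑ c, (L b * u b) * (u c * u c) :=
          Finset.sum_congr rfl fun b _ => Finset.sum_congr rfl fun c _ => e3 b c
      _ = ∑ b, (L b * u b) * (∑ c, u c * u c) :=
          Finset.sum_congr rfl fun b _ => (Finset.mul_sum _ _ _).symm
      _ = ∑ b, (L b * u b) * 1 := by rw [f1]
      _ = ∑ a, L a * u a := by simp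
  have hTTT : (∑ b, ∑ c, ∑ a, T a b c * u a * u b * u c) = K * (∑ a, L a * u a) := by
    have expand : ∀ b c a, T a b c * u a * u b * u c
        = K * (1/3) * ((if a = b then (1:ℝ) else 0) * (L c * (u a * u b * u c)))
          + K * (1/3) * ((if b = c then (1:ℝ) else 0) * (L a * (u a * u b * u c)))
          + K * (1/3) * ((if c = a then (1:ℝ) else 0) * (L b * (u a * u b * u c))) := by
      intro b c a; rw [hT a b c]; ring
    calc (∑ b, ∑ c, ∑ a, T a b c * u a * u b * u c)
        = ∑ b, ∑ c, ∑ a, (K * (1/3) * ((if a = b then (1:ℝ) else 0) * (L c * (u a * u b * u c)))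
          + K * (1/3) * ((if b = c then (1:ℝ) else 0) * (L a * (u a * u b * u c)))
          + K * (1/3) * ((if c = a then (1:ℝ) else 0) * (L b * (u a * u b * u c)))) :=
          Finset.sum_congr rfl fun b _ => Finset.sum_congr rfl fun c _ =>
            Finset.sum_congr rfl fun a _ => expand b c a
      _ = K * (1/3) * (∑ b, ∑ c, ∑ a, (if a = b then (1:ℝ) else 0) * (L c * (u a * u b * u c)))
          + K * (1/3) * (∑ b, ∑ c, ∑ a, (if b = c then (1:ℝ) else 0) * (L a * (u a * u b * u c)))
          + K * (1/3) * (∑ b, ∑ c, ∑ a, (if c = a then (1:ℝ) else 0) * (L b * (u a * u b * u c))) := by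
          simp [Finset.sum_add_distrib, Finset.mul_sum]
      _ = K * (∑ a, L a * u a) := by rw [s1, s2, s3]; ring
  rw [hSA, hTTT, hY, Finset.sum_add_distrib, hCfirst, hgw, hwv]
  ring

end Helpers

/-- Let `τ : ℝⁿ → ℝ` be a smooth function satisfying
`∂_a ∂_b ∂_c τ = (3/(n+2)) δ_{(ab} ∂_{c)} Δτ` (vanishing of the trace-free part of the
third-derivative tensor; the flat case of the conformal first BGG equation on densities).
Then for every unit-speed flat conformal circle `γ : I → ℝⁿ` (i.e. `‖γ'‖ = 1` and
`γ''' = −‖γ''‖² γ'` on the open interval `I`), the function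
`t ↦ ½ Hess τ(γ t)(γ' t, γ' t) − (3/(2(n+2))) Δτ(γ t) − ⟨∇τ(γ t), γ'' t⟩ − ‖γ'' t‖² τ(γ t)`
is constant on `I`. -/
theorem bgg_density_conformal_circle_first_integral_flat
    (n : ℕ) (τ : EuclideanSpace ℝ (Fin n) → ℝ) (hτ : ContDiff ℝ (⊤ : ℕ∞) τ)
    (lap : EuclideanSpace ℝ (Fin n) → ℝ)
    (hlap : ∀ x, lap x = ∑ p, epd n p (epd n p τ) x)
    (hBGG : ∀ (x : EuclideanSpace ℝ (Fin n)) (a b c : Fin n),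
      epd n a (epd n b (epd n c τ)) x =
        ((3 : ℝ) / ((n : ℝ) + 2)) * ((1 / 3) *
          ((if a = b then (1 : ℝ) else 0) * epd n c lap x
            + (if b = c then (1 : ℝ) else 0) * epd n a lap x
            + (if c = a then (1 : ℝ) else 0) * epd n b lap x)))
    (I : Set ℝ) (hI : IsOpen I) (hI' : I.OrdConnected)
    (γ : ℝ → EuclideanSpace ℝ (Fin n)) (hγ : ContDiff ℝ (⊤ : ℕ∞) γ)
    (hunit : ∀ t ∈ I, ‖deriv γ t‖ = 1)
    (hcc : ∀ t ∈ I,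
      deriv (deriv (deriv γ)) t = -‖deriv (deriv γ) t‖ ^ 2 • deriv γ t) :
    ∃ C : ℝ, ∀ t ∈ I,
      (1 / 2) * (∑ b, ∑ c, epd n b (epd n c τ) (γ t) * deriv γ t b * deriv γ t c)
        - ((3 : ℝ) / (2 * ((n : ℝ) + 2))) * lap (γ t)
        - (∑ b, epd n b τ (γ t) * deriv (deriv γ) t b)
        - ‖deriv (deriv γ) t‖ ^ 2 * τ (γ t) = C := by
  have hlfun : lap = fun x => ∑ p, epd n p (epd n p τ) x := funext hlap
  subst hlfun
  have hτ1 : ∀ b, ContDiff ℝ (⊤ : ℕ∞) (epd n b τ) := fun b => epd_contDiff hτ b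
  have hH2 : ∀ b c, ContDiff ℝ (⊤ : ℕ∞) (epd n b (epd n c τ)) := fun b c => epd_contDiff (hτ1 c) b
  have hlap' : ContDiff ℝ (⊤ : ℕ∞) (fun x => ∑ p, epd n p (epd n p τ) x) :=
    ContDiff.sum fun p _ => hH2 p p
  have hγ0 : Differentiable ℝ γ := hγ.differentiable (by simp)
  have hγi : ContDiff ℝ (⊤ : ℕ∞) γ := hγ.of_le (by simp)
  have hγ1 : ContDiff ℝ (⊤ : ℕ∞) (deriv γ) := (contDiff_infty_iff_deriv.mp hγi).2
  have hγ1d : Differentiable ℝ (deriv γ) := hγ1.differentiable (by simp)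
  have hγ2 : ContDiff ℝ (⊤ : ℕ∞) (deriv (deriv γ)) := (contDiff_infty_iff_deriv.mp hγ1).2
  have hγ2d : Differentiable ℝ (deriv (deriv γ)) := hγ2.differentiable (by simp)
  set Φ : ℝ → ℝ := fun t =>
    (1 / 2) * (∑ b, ∑ c, epd n b (epd n c τ) (γ t) * deriv γ t b * deriv γ t c)
      - ((3 : ℝ) / (2 * ((n : ℝ) + 2))) * ((fun x => ∑ p, epd n p (epd n p τ) x) (γ t))
      - (∑ b, epd n b τ (γ t) * deriv (deriv γ) t b)
      - (∑ a, deriv (deriv γ) t a * deriv (deriv γ) t a) * τ (γ t) with hΦ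
  have hzero : ∀ t ∈ I, HasDerivAt Φ 0 t := by
    intro t ht
    have hA : HasDerivAt (fun s => ∑ b, ∑ c, epd n b (epd n c τ) (γ s) * deriv γ s b * deriv γ s c)
        (∑ b, ∑ c, (((∑ a, epd n a (epd n b (epd n c τ)) (γ t) * deriv γ t a) * deriv γ t b
              + epd n b (epd n c τ) (γ t) * deriv (deriv γ) t b) * deriv γ t c
            + epd n b (epd n c τ) (γ t) * deriv γ t b * deriv (deriv γ) t c)) t := by
      refine HasDerivAt.fun_sum fun b _ => HasDerivAt.fun_sum fun c _ => ?_
      exact ((hasDerivAt_comp_curve (hH2 b c) hγ0 t).fun_mul (hasDerivAt_comp_apply hγ1d t b)).fun_mul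
        (hasDerivAt_comp_apply hγ1d t c)
    have hB : HasDerivAt (fun s => (fun x => ∑ p, epd n p (epd n p τ) x) (γ s))
        (∑ a, epd n a (fun x => ∑ p, epd n p (epd n p τ) x) (γ t) * deriv γ t a) t :=
      hasDerivAt_comp_curve hlap' hγ0 t
    have hC : HasDerivAt (fun s => ∑ b, epd n b τ (γ s) * deriv (deriv γ) s b)
        (∑ b, ((∑ a, epd n a (epd n b τ) (γ t) * deriv γ t a) * deriv (deriv γ) t b
            + epd n b τ (γ t) * deriv (deriv (deriv γ)) t b)) t :=
      HasDerivAt.fun_sum fun b _ =>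
        (hasDerivAt_comp_curve (hτ1 b) hγ0 t).fun_mul (hasDerivAt_comp_apply hγ2d t b)
    have hD : HasDerivAt (fun s => (∑ a, deriv (deriv γ) s a * deriv (deriv γ) s a) * τ (γ s))
        ((∑ a, (deriv (deriv (deriv γ)) t a * deriv (deriv γ) t a
            + deriv (deriv γ) t a * deriv (deriv (deriv γ)) t a)) * τ (γ t)
          + (∑ a, deriv (deriv γ) t a * deriv (deriv γ) t a)
            * (∑ a, epd n a τ (γ t) * deriv γ t a)) t :=
      (HasDerivAt.fun_sum fun a _ =>
          (hasDerivAt_comp_apply hγ2d t a).fun_mul (hasDerivAt_comp_apply hγ2d t a)).fun_mul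
        (hasDerivAt_comp_curve hτ hγ0 t)
    have hFull := (((hA.const_mul ((1:ℝ)/2)).sub
      (hB.const_mul ((3:ℝ)/(2*((n:ℝ)+2))))).sub hC).sub hD
    -- first integrals / orthogonality facts
    have f1 : (∑ a, deriv γ t a * deriv γ t a) = 1 := by
      rw [normsq, hunit t ht]; norm_num
    have f2 : (∑ a, deriv γ t a * deriv (deriv γ) t a) = 0 := by
      have hq : HasDerivAt (fun s => ∑ a, deriv γ s a * deriv γ s a)
          (∑ a, (deriv (deriv γ) t a * deriv γ t a + deriv γ t a * deriv (deriv γ) t a)) t :=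
        HasDerivAt.fun_sum fun a _ =>
          (hasDerivAt_comp_apply hγ1d t a).fun_mul (hasDerivAt_comp_apply hγ1d t a)
      have hev : (fun s => ∑ a, deriv γ s a * deriv γ s a) =ᶠ[nhds t] (fun _ => (1:ℝ)) := by
        filter_upwards [hI.mem_nhds ht] with s hs
        rw [normsq, hunit s hs]; norm_num
      have h1' : HasDerivAt (fun s => ∑ a, deriv γ s a * deriv γ s a) 0 t :=
        (hasDerivAt_const t (1:ℝ)).congr_of_eventuallyEq hev
      have huniq := hq.unique h1'
      have hsplit : (∑ a, (deriv (deriv γ) t a * deriv γ t a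
          + deriv γ t a * deriv (deriv γ) t a))
          = 2 * ∑ a, deriv γ t a * deriv (deriv γ) t a := by
        rw [Finset.mul_sum]
        exact Finset.sum_congr rfl fun a _ => by ring
      rw [hsplit] at huniq
      linarith
    have f3 : ∀ a, deriv (deriv (deriv γ)) t a
        = -(∑ b, deriv (deriv γ) t b * deriv (deriv γ) t b) * deriv γ t a := by
      intro a
      have h := hcc t ht
      have h2 : deriv (deriv (deriv γ)) t a
          = (-‖deriv (deriv γ) t‖ ^ 2 • deriv γ t) a := by rw [h]
      rw [h2]
      simp only [PiLp.smul_apply, smul_eq_mul]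
      rw [← normsq]
    have halg := main_algebra n ((3:ℝ)/((n:ℝ)+2))
      (fun a b c => epd n a (epd n b (epd n c τ)) (γ t))
      (fun a b => epd n a (epd n b τ) (γ t))
      (fun b => epd n b τ (γ t))
      (fun a => epd n a (fun x => ∑ p, epd n p (epd n p τ) x) (γ t))
      (fun a => deriv γ t a) (fun a => deriv (deriv γ) t a)
      (fun a => deriv (deriv (deriv γ)) t a)
      (τ (γ t))
      (fun a b c => hBGG (γ t) a b c)
      (fun a b => epd_comm hτ a b (γ t))
      f1 f2 f3
    have h0 : ((1:ℝ)/2 * (∑ b, ∑ c, (((∑ a, epd n a (epd n b (epd n c τ)) (γ t) * deriv γ t a)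
              * deriv γ t b + epd n b (epd n c τ) (γ t) * deriv (deriv γ) t b) * deriv γ t c
            + epd n b (epd n c τ) (γ t) * deriv γ t b * deriv (deriv γ) t c))
        - (3:ℝ)/(2*((n:ℝ)+2))
          * (∑ a, epd n a (fun x => ∑ p, epd n p (epd n p τ) x) (γ t) * deriv γ t a)
        - (∑ b, ((∑ a, epd n a (epd n b τ) (γ t) * deriv γ t a) * deriv (deriv γ) t b
            + epd n b τ (γ t) * deriv (deriv (deriv γ)) t b))
        - ((∑ a, (deriv (deriv (deriv γ)) t a * deriv (deriv γ) t a
              + deriv (deriv γ) t a * deriv (deriv (deriv γ)) t a)) * τ (γ t)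
          + (∑ a, deriv (deriv γ) t a * deriv (deriv γ) t a)
            * (∑ a, epd n a τ (γ t) * deriv γ t a))) = 0 := by
      rw [show (3:ℝ)/(2*((n:ℝ)+2)) = ((3:ℝ)/((n:ℝ)+2))/2 by
        have h2 : ((n:ℝ)+2) ≠ 0 := by positivity
        field_simp]
      exact halg
    rw [hΦ]
    exact h0 ▸ hFull
  have hconv : Convex ℝ I := convex_iff_ordConnected.mpr hI'
  have hdiff : DifferentiableOn ℝ Φ I := fun z hz =>
    ((hzero z hz).differentiableAt).differentiableWithinAt
  have hfz : ∀ z ∈ I, fderivWithin ℝ Φ I z = 0 := by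
    intro z hz
    rw [fderivWithin_of_isOpen hI hz, (hzero z hz).hasFDerivAt.fderiv]
    ext
    simp
  obtain (rfl | ⟨t₀, ht₀⟩) := I.eq_empty_or_nonempty
  · exact ⟨0, by simp⟩
  · refine ⟨Φ t₀, fun t ht => ?_⟩
    have hnorm : ‖deriv (deriv γ) t‖ ^ 2
        = ∑ a, deriv (deriv γ) t a * deriv (deriv γ) t a := (normsq _).symm
    rw [hnorm]
    show Φ t = Φ t₀
    exact hconv.is_const_of_fderivWithin_eq_zero hdiff hfz ht ht₀
end

section
/- Let γ : I → ℝⁿ be a smooth curve with γ'(t) ≠ 0 for all t, satisfying the unparametrised flat conformal-circle equation: (γ'''(t) − 3 (⟨γ'(t), γ''(t)⟩ / ⟨γ'(t), γ'(t)⟩) γ''(t)) ∧ γ'(t) = 0 in Λ²ℝⁿ for all t ∈ I. If φ : J → I is a smooth map with φ'(s) > 0 for all s ∈ J, then the reparametrised curve γ ∘ φ satisfies the same equation on J. -/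
/-- Let `γ : I → ℝⁿ` be a smooth regular curve satisfying the
unparametrised flat conformal-circle equation
`(γ''' − 3 (⟨γ',γ''⟩/⟨γ',γ'⟩) γ'') ∧ γ' = 0` in `Λ²ℝⁿ` on `I`. If `φ : J → I` is smooth
with `φ' > 0`, then the reparametrised curve `γ ∘ φ` satisfies the same equation on `J`. -/
theorem unparametrised_conformal_circle_equation_reparam_invariant
    (n : ℕ) (I J : Set ℝ) (hI : IsOpen I) (hJ : IsOpen J)
    (γ : ℝ → EuclideanSpace ℝ (Fin n)) (hγ : ContDiff ℝ (⊤ : ℕ∞) γ)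
    (hreg : ∀ t ∈ I, deriv γ t ≠ 0)
    (hcc : ∀ t ∈ I,
      ExteriorAlgebra.ι ℝ (deriv (deriv (deriv γ)) t
          - (3 * (inner ℝ (deriv γ t) (deriv (deriv γ) t) : ℝ)
              / (inner ℝ (deriv γ t) (deriv γ t) : ℝ)) • deriv (deriv γ) t) *
        ExteriorAlgebra.ι ℝ (deriv γ t) = 0)
    (φ : ℝ → ℝ) (hφ : ContDiff ℝ (⊤ : ℕ∞) φ) (hφmap : Set.MapsTo φ J I)
    (hφ' : ∀ s ∈ J, 0 < deriv φ s) :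
    ∀ s ∈ J,
      ExteriorAlgebra.ι ℝ (deriv (deriv (deriv (γ ∘ φ))) s
          - (3 * (inner ℝ (deriv (γ ∘ φ) s) (deriv (deriv (γ ∘ φ)) s) : ℝ)
              / (inner ℝ (deriv (γ ∘ φ) s) (deriv (γ ∘ φ) s) : ℝ)) • deriv (deriv (γ ∘ φ)) s) *
        ExteriorAlgebra.ι ℝ (deriv (γ ∘ φ) s) = 0 := by
  intro s hs
  -- smoothness bookkeeping
  have hγ0 : ContDiff ℝ (⊤ : ℕ∞) γ := hγ.of_le (by simp)
  have hφ0 : ContDiff ℝ (⊤ : ℕ∞) φ := hφ.of_le (by simp)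
  have hγ1 : ContDiff ℝ (⊤ : ℕ∞) (deriv γ) := (contDiff_infty_iff_deriv.mp hγ0).2
  have hγ2 : ContDiff ℝ (⊤ : ℕ∞) (deriv (deriv γ)) := (contDiff_infty_iff_deriv.mp hγ1).2
  have hφ1 : ContDiff ℝ (⊤ : ℕ∞) (deriv φ) := (contDiff_infty_iff_deriv.mp hφ0).2
  have hφ2 : ContDiff ℝ (⊤ : ℕ∞) (deriv (deriv φ)) := (contDiff_infty_iff_deriv.mp hφ1).2
  have dγ : Differentiable ℝ γ := hγ0.differentiable (by simp)
  have dγ1 : Differentiable ℝ (deriv γ) := hγ1.differentiable (by simp)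
  have dγ2 : Differentiable ℝ (deriv (deriv γ)) := hγ2.differentiable (by simp)
  have dφ : Differentiable ℝ φ := hφ0.differentiable (by simp)
  have dφ1 : Differentiable ℝ (deriv φ) := hφ1.differentiable (by simp)
  have dφ2 : Differentiable ℝ (deriv (deriv φ)) := hφ2.differentiable (by simp)
  have dcomp1 : Differentiable ℝ (fun x => deriv γ (φ x)) := dγ1.comp dφ
  have dcomp2 : Differentiable ℝ (fun x => deriv (deriv γ) (φ x)) := dγ2.comp dφ
  -- first derivative
  have h1 : deriv (γ ∘ φ) = fun x => deriv φ x • deriv γ (φ x) :=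
    funext fun x => deriv.scomp x (dγ (φ x)) (dφ x)
  -- second derivative
  have h2 : deriv (deriv (γ ∘ φ)) = fun x =>
      deriv φ x • (deriv φ x • deriv (deriv γ) (φ x)) + deriv (deriv φ) x • deriv γ (φ x) := by
    funext x
    rw [h1]
    rw [deriv_fun_smul (dφ1 x) (dcomp1 x)]
    congr 1
    rw [show (fun x => deriv γ (φ x)) = deriv γ ∘ φ from rfl,
      deriv.scomp x (dγ1 (φ x)) (dφ x)]
  -- third derivative at s
  have h3 : deriv (deriv (deriv (γ ∘ φ))) s =
      deriv (deriv (deriv φ)) s • deriv γ (φ s)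
        + (3 * deriv φ s * deriv (deriv φ) s) • deriv (deriv γ) (φ s)
        + (deriv φ s ^ 3) • deriv (deriv (deriv γ)) (φ s) := by
    rw [h2]
    rw [deriv_fun_add (f := fun x => deriv φ x • deriv φ x • deriv (deriv γ) (φ x))
      (g := fun x => deriv (deriv φ) x • deriv γ (φ x)) ((dφ1.smul (dφ1.smul dcomp2)) s) ((dφ2.smul dcomp1) s)]
    rw [deriv_fun_smul (f := fun x => deriv φ x • deriv (deriv γ) (φ x)) (dφ1 s) ((dφ1.smul dcomp2) s)]
    rw [deriv_fun_smul (dφ1 s) (dcomp2 s)]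
    rw [deriv_fun_smul (dφ2 s) (dcomp1 s)]
    rw [show (fun x => deriv (deriv γ) (φ x)) = deriv (deriv γ) ∘ φ from rfl,
      deriv.scomp s (dγ2 (φ s)) (dφ s)]
    rw [show (fun x => deriv γ (φ x)) = deriv γ ∘ φ from rfl,
      deriv.scomp s (dγ1 (φ s)) (dφ s)]
    match_scalars <;> ring
  -- notation
  set t := φ s with ht'
  have ht : t ∈ I := hφmap hs
  set a := deriv φ s with ha'
  set b := deriv (deriv φ) s with hb'
  set c := deriv (deriv (deriv φ)) s with hc'
  set u := deriv γ t with hu'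
  set v := deriv (deriv γ) t with hv'
  set w := deriv (deriv (deriv γ)) t with hw'
  have ha : a ≠ 0 := ne_of_gt (hφ' s hs)
  have hP : (inner ℝ u u : ℝ) ≠ 0 := inner_self_ne_zero.mpr (hreg t ht)
  set P : ℝ := inner ℝ u u with hP'
  set Q : ℝ := inner ℝ u v with hQ'
  have e1 : deriv (γ ∘ φ) s = a • u := by rw [h1]
  have e2 : deriv (deriv (γ ∘ φ)) s = a • (a • v) + b • u := by rw [h2]
  rw [e1, e2, h3]
  -- inner products
  have i1 : (inner ℝ (a • u) (a • (a • v) + b • u) : ℝ) = a * (a * a) * Q + a * b * P := by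
    simp only [inner_add_right, real_inner_smul_left, real_inner_smul_right]
    rw [← hP', ← hQ']
    ring
  have i2 : (inner ℝ (a • u) (a • u) : ℝ) = a * a * P := by
    simp only [real_inner_smul_left, real_inner_smul_right]
    rw [← hP']
    ring
  rw [i1, i2]
  -- express the conformal-circle vector in terms of u and (w - (3Q/P) • v)
  have key : (c • u + (3 * a * b) • v + a ^ 3 • w)
      - (3 * (a * (a * a) * Q + a * b * P) / (a * a * P)) • (a • (a • v) + b • u)
      = (c - (3 * (a * (a * a) * Q + a * b * P) / (a * a * P)) * b) • u
        + (a ^ 3) • (w - (3 * Q / P) • v) := by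
    match_scalars
    · ring
    · field_simp
      ring
    · ring
  rw [key]
  have hcc' : ExteriorAlgebra.ι ℝ (w - (3 * Q / P) • v) * ExteriorAlgebra.ι ℝ u = 0 :=
    hcc t ht
  rw [map_add, map_smul, map_smul, map_smul, add_mul, smul_mul_assoc, smul_mul_assoc,
    mul_smul_comm, mul_smul_comm, ExteriorAlgebra.ι_sq_zero, hcc']
  simp
end
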